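/- arXiv:2508.13322 — 2 statements merged into one kernel-verified Lean document; each statement's English description precedes it below -/
import Mathlib

section
/- Let f : [0,1]^2 → ℝ satisfy the mixed Hölder condition |f(x',y') - f(x,y') - f(x',y) + f(x,y)| ≤ C|x'-x|^α |y'-y|^α for 0 < α < 1/2. Let Q^j denote the dyadic difference operator P^{j+1} - P^j acting in the first variable and Q'^{j'} the analogous operator in the second variable. Then ‖Q^j Q'^{j'} f‖_{L^∞([0,1]^2)} ≤ C' 2^{-jα} 2^{-j'α} for a constant C' depending only on C. -/
open MeasureTheory

/-- Dyadic averaging at scale `j` in the first variable of `f : ℝ → ℝ → ℝ`. -/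
noncomputable def avg1 (j : ℕ) (f : ℝ → ℝ → ℝ) (x y : ℝ) : ℝ :=
  (2:ℝ)^j * ∫ s in Set.Ioc (((⌈(2:ℝ)^j * x⌉ : ℝ) - 1) / (2:ℝ)^j)
      ((⌈(2:ℝ)^j * x⌉ : ℝ) / (2:ℝ)^j), f s y

/-- Dyadic averaging at scale `j'` in the second variable. -/
noncomputable def avg2 (j' : ℕ) (f : ℝ → ℝ → ℝ) (x y : ℝ) : ℝ :=
  (2:ℝ)^j' * ∫ s in Set.Ioc (((⌈(2:ℝ)^j' * y⌉ : ℝ) - 1) / (2:ℝ)^j')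
      ((⌈(2:ℝ)^j' * y⌉ : ℝ) / (2:ℝ)^j'), f x s

/-- `Q^j = P^{j+1} - P^j` in the first variable. -/
noncomputable def diff1 (j : ℕ) (f : ℝ → ℝ → ℝ) (x y : ℝ) : ℝ :=
  avg1 (j+1) f x y - avg1 j f x y

/-- `Q'^{j'} = P'^{j'+1} - P'^{j'}` in the second variable. -/
noncomputable def diff2 (j' : ℕ) (f : ℝ → ℝ → ℝ) (x y : ℝ) : ℝ :=
  avg2 (j'+1) f x y - avg2 j' f x y

/-! Both operators `Q^j` and `Q'^{j'}` annihilate constants, so in `Q^j Q'^{j'} f (x, y)` the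
function `f` may be replaced by its rectangular increment
`R(s, t) = f(s, t) - f(x, t) - f(s, y) + f(x, y)` based at `(x, y)`. The averages only see points
of the dyadic intervals of length `2^{-j}` around `x` and `2^{-j'}` around `y`, where the mixed
Hölder condition gives `|R(s, t)| ≤ C 2^{-jα} 2^{-j'α}`. Since the dyadic interval at scale `k + 1`
lies inside the one at scale `k`, each of the two differences of averages at most doubles this
bound. -/

noncomputable section

def dyadicIoc (k : ℕ) (z : ℝ) : Set ℝ :=
  Set.Ioc (((⌈(2:ℝ)^k * z⌉ : ℝ) - 1) / (2:ℝ)^k) ((⌈(2:ℝ)^k * z⌉ : ℝ) / (2:ℝ)^k)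

def dyadicAvg (k : ℕ) (g : ℝ → ℝ) (z : ℝ) : ℝ :=
  (2:ℝ)^k * ∫ s in dyadicIoc k z, g s

def dyadicDiff (k : ℕ) (g : ℝ → ℝ) (z : ℝ) : ℝ :=
  dyadicAvg (k + 1) g z - dyadicAvg k g z

def rectangularIncrement (f : ℝ → ℝ → ℝ) (x y s t : ℝ) : ℝ :=
  f s t - f x t - f s y + f x y

end

theorem diff1_eq_dyadicDiff (j : ℕ) (F : ℝ → ℝ → ℝ) (x y : ℝ) :
    diff1 j F x y = dyadicDiff j (F · y) x := rfl

theorem diff2_eq_dyadicDiff (j : ℕ) (f : ℝ → ℝ → ℝ) (x y : ℝ) :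
    diff2 j f x y = dyadicDiff j (f x) y := rfl

section DyadicIoc

variable (k : ℕ) (z : ℝ)

theorem self_mem_dyadicIoc : z ∈ dyadicIoc k z := by
  have hp : (0:ℝ) < (2:ℝ)^k := by positivity
  constructor
  · rw [div_lt_iff₀ hp]
    linarith [Int.ceil_lt_add_one ((2:ℝ)^k * z), mul_comm z ((2:ℝ)^k)]
  · rw [le_div_iff₀ hp]
    linarith [Int.le_ceil ((2:ℝ)^k * z), mul_comm z ((2:ℝ)^k)]

theorem volume_real_dyadicIoc : volume.real (dyadicIoc k z) = ((2:ℝ)^k)⁻¹ := by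
  rw [dyadicIoc, Real.volume_real_Ioc_of_le (by gcongr; linarith)]
  field_simp
  ring

theorem dyadicIoc_succ_subset : dyadicIoc (k + 1) z ⊆ dyadicIoc k z := by
  set w := (2:ℝ)^k * z
  have hw : (2:ℝ)^(k + 1) * z = 2 * w := by rw [pow_succ]; ring
  have hupper : ⌈2 * w⌉ ≤ 2 * ⌈w⌉ := Int.ceil_le.mpr (by push_cast; linarith [Int.le_ceil w])
  have hlower : 2 * ⌈w⌉ - 2 < ⌈2 * w⌉ :=
    Int.lt_ceil.mpr (by push_cast; linarith [Int.ceil_lt_add_one w])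
  have hupper' : (⌈2 * w⌉ : ℝ) ≤ 2 * ⌈w⌉ := by exact_mod_cast hupper
  have hlower' : 2 * (⌈w⌉ : ℝ) - 1 ≤ ⌈2 * w⌉ := by
    have : 2 * ⌈w⌉ - 1 ≤ ⌈2 * w⌉ := by omega
    exact_mod_cast this
  have hp : (0:ℝ) < (2:ℝ)^k := by positivity
  rw [dyadicIoc, dyadicIoc, hw, pow_succ]
  apply Set.Ioc_subset_Ioc
  · rw [div_le_div_iff₀ hp (by positivity)]
    nlinarith
  · rw [div_le_div_iff₀ (by positivity) hp]
    nlinarith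

theorem dyadicIoc_subset_Icc {z : ℝ} (hz : z ∈ Set.Ioc (0:ℝ) 1) :
    dyadicIoc k z ⊆ Set.Icc 0 1 := by
  have hp : (0:ℝ) < (2:ℝ)^k := by positivity
  have hlower : (1:ℝ) ≤ ⌈(2:ℝ)^k * z⌉ := by exact_mod_cast Int.ceil_pos.mpr (mul_pos hp hz.1)
  have hupper : (⌈(2:ℝ)^k * z⌉ : ℝ) ≤ (2:ℝ)^k := by
    have : ⌈(2:ℝ)^k * z⌉ ≤ (2:ℤ)^k := Int.ceil_le.mpr (by push_cast; nlinarith [hz.2])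
    exact_mod_cast this
  apply Set.Ioc_subset_Icc_self.trans (Set.Icc_subset_Icc _ _)
  · exact div_nonneg (by linarith) hp.le
  · rwa [div_le_one hp]

variable {k z}

theorem abs_sub_le_of_mem_dyadicIoc {s : ℝ} (hs : s ∈ dyadicIoc k z) :
    |s - z| ≤ ((2:ℝ)^k)⁻¹ := by
  have hz := self_mem_dyadicIoc k z
  have hlen : (⌈(2:ℝ)^k * z⌉ : ℝ) / (2:ℝ)^k - ((⌈(2:ℝ)^k * z⌉ : ℝ) - 1) / (2:ℝ)^k
      = ((2:ℝ)^k)⁻¹ := by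
    field_simp
    ring
  rw [abs_sub_le_iff]
  exact ⟨by linarith [hs.2, hz.1], by linarith [hs.1, hz.2]⟩

theorem abs_sub_rpow_le_of_mem_dyadicIoc {s α : ℝ} (hα : 0 ≤ α) (hs : s ∈ dyadicIoc k z) :
    |s - z| ^ α ≤ (2:ℝ) ^ (-(k:ℝ) * α) := by
  rw [Real.rpow_mul (by norm_num), Real.rpow_neg (by norm_num), Real.rpow_natCast]
  exact Real.rpow_le_rpow (abs_nonneg _) (abs_sub_le_of_mem_dyadicIoc hs) hα

end DyadicIoc

section DyadicAvg

variable {k : ℕ} {z : ℝ}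

theorem dyadicAvg_const (k : ℕ) (c z : ℝ) : dyadicAvg k (fun _ => c) z = c := by
  rw [dyadicAvg, setIntegral_const, volume_real_dyadicIoc, smul_eq_mul]
  field_simp

theorem integrableOn_dyadicIoc {g : ℝ → ℝ} (hg : LocallyIntegrable g) :
    IntegrableOn g (dyadicIoc k z) :=
  (hg.integrableOn_isCompact isCompact_Icc).mono_set Set.Ioc_subset_Icc_self

theorem dyadicAvg_add {g₁ g₂ : ℝ → ℝ} (hg₁ : LocallyIntegrable g₁)
    (hg₂ : LocallyIntegrable g₂) :
    dyadicAvg k (g₁ + g₂) z = dyadicAvg k g₁ z + dyadicAvg k g₂ z := by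
  rw [dyadicAvg, dyadicAvg, dyadicAvg, ← mul_add, ← integral_add
    (integrableOn_dyadicIoc hg₁) (integrableOn_dyadicIoc hg₂)]
  rfl

theorem dyadicDiff_add {g₁ g₂ : ℝ → ℝ} (hg₁ : LocallyIntegrable g₁)
    (hg₂ : LocallyIntegrable g₂) :
    dyadicDiff k (g₁ + g₂) z = dyadicDiff k g₁ z + dyadicDiff k g₂ z := by
  rw [dyadicDiff, dyadicDiff, dyadicDiff, dyadicAvg_add hg₁ hg₂, dyadicAvg_add hg₁ hg₂]
  ring

theorem dyadicDiff_const (k : ℕ) (c z : ℝ) : dyadicDiff k (fun _ => c) z = 0 := by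
  rw [dyadicDiff, dyadicAvg_const, dyadicAvg_const, sub_self]

theorem dyadicDiff_add_const {g : ℝ → ℝ} (hg : LocallyIntegrable g) (c : ℝ) :
    dyadicDiff k (g + fun _ => c) z = dyadicDiff k g z := by
  rw [dyadicDiff_add hg (locallyIntegrable_const c), dyadicDiff_const, add_zero]

theorem abs_dyadicAvg_le {g : ℝ → ℝ} {M : ℝ} (hg : ∀ s ∈ dyadicIoc k z, |g s| ≤ M) :
    |dyadicAvg k g z| ≤ M := by
  have hp : (0:ℝ) < (2:ℝ)^k := by positivity
  have hint : ‖∫ s in dyadicIoc k z, g s‖ ≤ M * ((2:ℝ)^k)⁻¹ := by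
    rw [← volume_real_dyadicIoc k z]
    exact norm_setIntegral_le_of_norm_le_const measure_Ioc_lt_top hg
  rw [dyadicAvg, abs_mul, abs_of_pos hp, ← Real.norm_eq_abs]
  calc (2:ℝ)^k * ‖∫ s in dyadicIoc k z, g s‖ ≤ (2:ℝ)^k * (M * ((2:ℝ)^k)⁻¹) := by gcongr
    _ = M := by field_simp

theorem abs_dyadicDiff_le {g : ℝ → ℝ} {M : ℝ} (hg : ∀ s ∈ dyadicIoc k z, |g s| ≤ M) :
    |dyadicDiff k g z| ≤ 2 * M := by
  have hfine := abs_dyadicAvg_le fun s hs => hg s (dyadicIoc_succ_subset k z hs)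
  have hcoarse := abs_dyadicAvg_le hg
  rw [dyadicDiff]
  linarith [abs_sub (dyadicAvg (k + 1) g z) (dyadicAvg k g z)]

theorem continuous_dyadicAvg_apply {F : ℝ → ℝ → ℝ} (hF : Continuous (Function.uncurry F))
    (k : ℕ) (z : ℝ) : Continuous fun s => dyadicAvg k (F s) z := by
  simp_rw [dyadicAvg, dyadicIoc, ← integral_Icc_eq_integral_Ioc]
  exact continuous_const.mul (continuous_parametric_integral_of_continuous hF isCompact_Icc)

theorem continuous_dyadicDiff_apply {F : ℝ → ℝ → ℝ} (hF : Continuous (Function.uncurry F))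
    (k : ℕ) (z : ℝ) : Continuous fun s => dyadicDiff k (F s) z :=
  (continuous_dyadicAvg_apply hF (k + 1) z).sub (continuous_dyadicAvg_apply hF k z)

end DyadicAvg

theorem diff1_diff2_eq_rectangularIncrement {f : ℝ → ℝ → ℝ}
    (hf : Continuous (Function.uncurry f)) (j j' : ℕ) (x y : ℝ) :
    diff1 j (fun a b => diff2 j' f a b) x y
      = diff1 j (fun a b => diff2 j' (rectangularIncrement f x y) a b) x y := by
  set R := rectangularIncrement f x y
  have hR : Continuous (Function.uncurry R) := by
    unfold R rectangularIncrement
    fun_prop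
  have hslice : ∀ s, f s = (R s + f x) + fun _ => f s y - f x y := by
    intro s
    funext t
    simp only [R, rectangularIncrement, Pi.add_apply]
    ring
  have hdiff2 :
      (fun s => diff2 j' f s y) = (fun s => diff2 j' R s y) + fun _ => diff2 j' f x y := by
    funext s
    simp only [diff2_eq_dyadicDiff, Pi.add_apply]
    rw [hslice s, dyadicDiff_add_const ((hR.uncurry_left s).locallyIntegrable.add
      (hf.uncurry_left x).locallyIntegrable), dyadicDiff_add (hR.uncurry_left s).locallyIntegrable
      (hf.uncurry_left x).locallyIntegrable]
  rw [diff1_eq_dyadicDiff, diff1_eq_dyadicDiff, hdiff2]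
  exact dyadicDiff_add_const (continuous_dyadicDiff_apply hR j' y).locallyIntegrable _

theorem abs_diff1_diff2_le {R : ℝ → ℝ → ℝ} {C α x y : ℝ} (hα : 0 ≤ α) (hC : 0 ≤ C)
    (hx : x ∈ Set.Ioc (0:ℝ) 1) (hy : y ∈ Set.Ioc (0:ℝ) 1)
    (hR : ∀ s ∈ Set.Icc (0:ℝ) 1, ∀ t ∈ Set.Icc (0:ℝ) 1,
      |R s t| ≤ C * |s - x| ^ α * |t - y| ^ α) (j j' : ℕ) :
    |diff1 j (fun a b => diff2 j' R a b) x y|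
      ≤ 4 * C * (2:ℝ) ^ (-(j:ℝ) * α) * (2:ℝ) ^ (-(j':ℝ) * α) := by
  have hrect : ∀ s ∈ dyadicIoc j x, ∀ t ∈ dyadicIoc j' y,
      |R s t| ≤ C * (2:ℝ) ^ (-(j:ℝ) * α) * (2:ℝ) ^ (-(j':ℝ) * α) := by
    intro s hs t ht
    calc |R s t| ≤ C * |s - x| ^ α * |t - y| ^ α :=
          hR s (dyadicIoc_subset_Icc j hx hs) t (dyadicIoc_subset_Icc j' hy ht)
      _ ≤ _ := by
          gcongr
          · exact abs_sub_rpow_le_of_mem_dyadicIoc hα hs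
          · exact abs_sub_rpow_le_of_mem_dyadicIoc hα ht
  calc |diff1 j (fun a b => diff2 j' R a b) x y|
      ≤ 2 * (2 * (C * (2:ℝ) ^ (-(j:ℝ) * α) * (2:ℝ) ^ (-(j':ℝ) * α))) :=
        abs_dyadicDiff_le fun s hs => abs_dyadicDiff_le (hrect s hs)
    _ = _ := by ring

theorem mixed_diff_bound_of_mixed_holder_general (f : ℝ → ℝ → ℝ) (C α : ℝ)
    (hα : 0 < α) (hC : 0 < C)
    (hf : ∀ x ∈ Set.Icc (0:ℝ) 1, ∀ x' ∈ Set.Icc (0:ℝ) 1,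
      ∀ y ∈ Set.Icc (0:ℝ) 1, ∀ y' ∈ Set.Icc (0:ℝ) 1,
      |f x' y' - f x y' - f x' y + f x y| ≤ C * |x' - x| ^ α * |y' - y| ^ α)
    (hcont : Continuous fun p : ℝ × ℝ => f p.1 p.2) :
    ∃ C' > 0, ∀ j j' : ℕ, ∀ x ∈ Set.Ioc (0:ℝ) 1, ∀ y ∈ Set.Ioc (0:ℝ) 1,
      |diff1 j (fun a b => diff2 j' f a b) x y|
        ≤ C' * (2:ℝ) ^ (-(j:ℝ) * α) * (2:ℝ) ^ (-(j':ℝ) * α) := by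
  refine ⟨4 * C, by positivity, fun j j' x hx y hy => ?_⟩
  rw [diff1_diff2_eq_rectangularIncrement hcont]
  exact abs_diff1_diff2_le hα.le hC.le hx hy
    (fun s hs t ht => hf x (Set.Ioc_subset_Icc_self hx) s hs y (Set.Ioc_subset_Icc_self hy) t ht)
    j j'

/-- Mixed Hölder functions have mixed martingale differences bounded by
`C' 2^{-jα} 2^{-j'α}`. -/
theorem mixed_diff_bound_of_mixed_holder (f : ℝ → ℝ → ℝ) (C α : ℝ)
    (hα : 0 < α) (hα' : α < 1/2) (hC : 0 < C)
    (hf : ∀ x ∈ Set.Icc (0:ℝ) 1, ∀ x' ∈ Set.Icc (0:ℝ) 1,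
      ∀ y ∈ Set.Icc (0:ℝ) 1, ∀ y' ∈ Set.Icc (0:ℝ) 1,
      |f x' y' - f x y' - f x' y + f x y| ≤ C * |x' - x| ^ α * |y' - y| ^ α)
    (hcont : Continuous fun p : ℝ × ℝ => f p.1 p.2) :
    ∃ C' > 0, ∀ j j' : ℕ, ∀ x ∈ Set.Ioc (0:ℝ) 1, ∀ y ∈ Set.Ioc (0:ℝ) 1,
      |diff1 j (fun a b => diff2 j' f a b) x y|
        ≤ C' * (2:ℝ) ^ (-(j:ℝ) * α) * (2:ℝ) ^ (-(j':ℝ) * α) :=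
  mixed_diff_bound_of_mixed_holder_general f C α hα hC hf hcont
end

section
/- Let 0 < α < 1/2 and let g : [0,1]^2 → ℝ be given by g = ∑_{j,j'} g_{j,j'} where each g_{j,j'} is constant on every dyadic rectangle I^j_k × I^{j'}_{k'} and ‖g_{j,j'}‖_{L^∞} ≤ C 2^{-(j+j')·2α}. Then the double series converges uniformly and for any two points x, x' lying in a common dyadic rectangle R of area 2^{-(j+j')}, the partial-sum tail satisfies |∑_{(m,m') : 2^{-(m+m')} ≤ 2^{-(j+j')}} (g_{m,m'}(x) - g_{m,m'}(x'))| ≤ C' 2^{-(j+j')·2α}·(j+j'+1), i.e. the residual inherits improved 2α mixed-Hölder-type regularity up to a logarithmic factor. -/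
open Real

lemma geom_tail_tsum {r : ℝ} (h0 : 0 ≤ r) (h1 : r < 1) (a : ℕ) :
    ∑' n : ℕ, (if a ≤ n then r ^ n else 0) = r ^ a * (1 - r)⁻¹ := by
  have hg : Summable (fun n : ℕ => r ^ n) := summable_geometric_of_lt_one h0 h1
  have hs : Summable (fun n : ℕ => if a ≤ n then r ^ n else 0) := by
    apply Summable.of_nonneg_of_le (fun n => ?_) (fun n => ?_) hg
    · split <;> positivity
    · split
      · exact le_refl _
      · positivity
  have h := Summable.sum_add_tsum_nat_add a hs
  have h1' : (∑ i ∈ Finset.range a, (if a ≤ i then r ^ i else 0)) = 0 := by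
    apply Finset.sum_eq_zero
    intro i hi
    rw [if_neg]
    exact fun hc => absurd (Finset.mem_range.mp hi) (not_lt.mpr hc)
  have h2' : (∑' n : ℕ, (if a ≤ n + a then r ^ (n + a) else 0)) = r ^ a * (1 - r)⁻¹ := by
    have he : (fun n : ℕ => (if a ≤ n + a then r ^ (n + a) else 0))
        = fun n : ℕ => r ^ n * r ^ a := by
      funext n
      rw [if_pos (by omega), pow_add]
    rw [he, tsum_mul_right, tsum_geometric_of_lt_one h0 h1]
    ring
  rw [← h, h1', h2', zero_add]

lemma geom_max_tsum {r : ℝ} (h0 : 0 ≤ r) (h1 : r < 1) (S : ℕ) :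
    ∑' m : ℕ, r ^ (max S m) = (S + 1 : ℝ) * r ^ S + r ^ (S + 1) * (1 - r)⁻¹ := by
  have hg : Summable (fun n : ℕ => r ^ n) := summable_geometric_of_lt_one h0 h1
  have hs : Summable (fun m : ℕ => r ^ (max S m)) := by
    apply Summable.of_nonneg_of_le (fun n => by positivity) (fun n => ?_) hg
    exact pow_le_pow_of_le_one h0 h1.le (le_max_right _ _)
  have h := Summable.sum_add_tsum_nat_add (S + 1) hs
  have h1' : (∑ i ∈ Finset.range (S + 1), r ^ (max S i)) = (S + 1 : ℝ) * r ^ S := by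
    have hc : ∀ i ∈ Finset.range (S + 1), r ^ (max S i) = r ^ S := by
      intro i hi
      have := Finset.mem_range.mp hi
      rw [max_eq_left (by omega)]
    rw [Finset.sum_congr rfl hc, Finset.sum_const, Finset.card_range, nsmul_eq_mul]
    push_cast
    ring
  have h2' : (∑' m : ℕ, r ^ (max S (m + (S + 1)))) = r ^ (S + 1) * (1 - r)⁻¹ := by
    have he : (fun m : ℕ => r ^ (max S (m + (S + 1)))) = fun m : ℕ => r ^ m * r ^ (S + 1) := by
      funext m
      rw [max_eq_right (by omega), pow_add]
    rw [he, tsum_mul_right, tsum_geometric_of_lt_one h0 h1]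
    ring
  rw [← h, h1', h2']

/-- A double multiscale sum `g = ∑_{j,j'} g_{j,j'}` with each `g_{j,j'}`
constant on dyadic rectangles at scale `(j,j')` and
`‖g_{j,j'}‖_∞ ≤ C 2^{-(j+j')2α}` converges (absolutely, hence uniformly by the
Weierstrass test), and for points in a common dyadic rectangle of area
`2^{-(j+j')}` the tail over scales `(m,m')` with `2^{-(m+m')} ≤ 2^{-(j+j')}`
is bounded by `C' 2^{-(j+j')2α} (j+j'+1)`. -/
theorem double_multiscale_tail_bound (α C : ℝ) (hα : 0 < α) (hα' : α < 1/2)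
    (hC : 0 < C) (gj : ℕ → ℕ → ℝ → ℝ → ℝ)
    (hconst : ∀ j j' k k' : ℕ, k < 2^j → k' < 2^j' →
      ∀ x ∈ Set.Ioc ((k:ℝ) / (2:ℝ)^j) (((k:ℝ)+1) / (2:ℝ)^j),
      ∀ x' ∈ Set.Ioc ((k:ℝ) / (2:ℝ)^j) (((k:ℝ)+1) / (2:ℝ)^j),
      ∀ y ∈ Set.Ioc ((k':ℝ) / (2:ℝ)^j') (((k':ℝ)+1) / (2:ℝ)^j'),
      ∀ y' ∈ Set.Ioc ((k':ℝ) / (2:ℝ)^j') (((k':ℝ)+1) / (2:ℝ)^j'),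
      gj j j' x y = gj j j' x' y')
    (hbdd : ∀ j j' : ℕ, ∀ x y : ℝ,
      |gj j j' x y| ≤ C * (2:ℝ) ^ (-((j:ℝ)+(j':ℝ)) * (2 * α))) :
    (∀ x y : ℝ, Summable (fun p : ℕ × ℕ => gj p.1 p.2 x y)) ∧
    ∃ C' > 0, ∀ j j' k k' : ℕ,
      ∀ x ∈ Set.Ioc ((k:ℝ) / (2:ℝ)^j) (((k:ℝ)+1) / (2:ℝ)^j),
      ∀ x' ∈ Set.Ioc ((k:ℝ) / (2:ℝ)^j) (((k:ℝ)+1) / (2:ℝ)^j),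
      ∀ y ∈ Set.Ioc ((k':ℝ) / (2:ℝ)^j') (((k':ℝ)+1) / (2:ℝ)^j'),
      ∀ y' ∈ Set.Ioc ((k':ℝ) / (2:ℝ)^j') (((k':ℝ)+1) / (2:ℝ)^j'),
      |∑' p : ℕ × ℕ, (if j + j' ≤ p.1 + p.2 then gj p.1 p.2 x y - gj p.1 p.2 x' y' else 0)|
        ≤ C' * (2:ℝ) ^ (-((j:ℝ)+(j':ℝ)) * (2 * α)) * ((j:ℝ) + (j':ℝ) + 1) := by
  set r : ℝ := (2:ℝ) ^ (-(2*α)) with hr_def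
  have hr0 : 0 < r := Real.rpow_pos_of_pos two_pos _
  have hr1 : r < 1 := Real.rpow_lt_one_of_one_lt_of_neg one_lt_two (by nlinarith)
  have h1r : 0 < 1 - r := by linarith
  have hinv0 : 0 < (1 - r)⁻¹ := by positivity
  have hinv1 : (1:ℝ) ≤ (1 - r)⁻¹ := by
    rw [one_le_inv_iff₀]
    constructor <;> nlinarith
  have hre : ∀ m m' : ℕ, (2:ℝ) ^ (-((m:ℝ)+(m':ℝ)) * (2*α)) = r ^ (m + m') := by
    intro m m'
    rw [hr_def, ← Real.rpow_natCast ((2:ℝ) ^ (-(2*α))) (m+m'),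
      ← Real.rpow_mul (by norm_num : (0:ℝ) ≤ 2)]
    congr 1
    push_cast; ring
  have hgeo : Summable (fun n : ℕ => r ^ n) := summable_geometric_of_lt_one hr0.le hr1
  have hprod : ∀ D : ℝ, Summable (fun p : ℕ × ℕ => D * r ^ (p.1 + p.2)) := by
    intro D
    have h := Summable.mul_of_nonneg hgeo hgeo
      (fun n => by positivity) (fun n => by positivity)
    exact (h.mul_left D).congr fun p => by rw [pow_add]
  have hsum : ∀ x y : ℝ, Summable (fun p : ℕ × ℕ => gj p.1 p.2 x y) := by
    intro x y
    apply Summable.of_abs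
    apply Summable.of_nonneg_of_le (fun p => abs_nonneg _) (fun p => ?_) (hprod C)
    have h := hbdd p.1 p.2 x y
    rwa [hre p.1 p.2] at h
  refine ⟨hsum, 2 * C * (1 - r)⁻¹ * ((1 - r)⁻¹ + 1), by positivity, ?_⟩
  intro j j' k k' x hx x' hx' y hy y' hy'
  set S : ℕ := j + j' with hS
  -- pointwise bound for the tail terms
  set F : ℕ × ℕ → ℝ :=
    fun p => if S ≤ p.1 + p.2 then gj p.1 p.2 x y - gj p.1 p.2 x' y' else 0 with hF
  set G : ℕ × ℕ → ℝ :=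
    fun p => if S ≤ p.1 + p.2 then 2 * C * r ^ (p.1 + p.2) else 0 with hG
  have hFG : ∀ p : ℕ × ℕ, |F p| ≤ G p := by
    intro p
    simp only [hF, hG]
    split
    · have h1 := hbdd p.1 p.2 x y
      have h2 := hbdd p.1 p.2 x' y'
      rw [hre p.1 p.2] at h1 h2
      calc |gj p.1 p.2 x y - gj p.1 p.2 x' y'| ≤ |gj p.1 p.2 x y| + |gj p.1 p.2 x' y'| :=
            abs_sub _ _
        _ ≤ 2 * C * r ^ (p.1 + p.2) := by linarith
    · simp
  have hGnonneg : ∀ p : ℕ × ℕ, 0 ≤ G p := by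
    intro p; simp only [hG]; split <;> positivity
  have hGsum : Summable G := by
    apply Summable.of_nonneg_of_le hGnonneg (fun p => ?_) (hprod (2 * C))
    simp only [hG]; split
    · exact le_refl _
    · positivity
  have hFsum : Summable fun p => |F p| :=
    Summable.of_nonneg_of_le (fun p => abs_nonneg _) hFG hGsum
  have step1 : |∑' p : ℕ × ℕ, F p| ≤ ∑' p : ℕ × ℕ, G p := by
    have habs : |∑' p : ℕ × ℕ, F p| ≤ ∑' p : ℕ × ℕ, |F p| := by
      have h := norm_tsum_le_tsum_norm (f := F)
        (by simpa only [Real.norm_eq_abs] using hFsum)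
      simpa only [Real.norm_eq_abs] using h
    exact habs.trans (Summable.tsum_le_tsum hFG hFsum hGsum)
  -- compute the bound sum by iterating
  have hinner : ∀ m : ℕ, (fun m' : ℕ => G (m, m'))
      = fun m' : ℕ => (2 * C * r ^ m) * (if S - m ≤ m' then r ^ m' else 0) := by
    intro m
    funext m'
    simp only [hG]
    have hiff : S ≤ m + m' ↔ S - m ≤ m' := by omega
    by_cases h : S ≤ m + m'
    · rw [if_pos h, if_pos (hiff.mp h), pow_add]; ring
    · rw [if_neg h, if_neg (fun hc => h (hiff.mpr hc)), mul_zero]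
  have hGval : ∑' p : ℕ × ℕ, G p
      = ∑' m : ℕ, (2 * C * (1 - r)⁻¹) * r ^ (max S m) := by
    rw [Summable.tsum_prod' hGsum hGsum.prod_factor]
    congr 1
    funext m
    rw [show (fun m' : ℕ => G (m, m')) = _ from hinner m, tsum_mul_left,
      geom_tail_tsum hr0.le hr1 (S - m)]
    have hmax : m + (S - m) = max S m := by omega
    rw [← hmax, pow_add]
    ring
  have step2 : ∑' p : ℕ × ℕ, G p
      ≤ 2 * C * (1 - r)⁻¹ * ((1 - r)⁻¹ + 1) * r ^ S * ((S : ℝ) + 1) := by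
    rw [hGval, tsum_mul_left, geom_max_tsum hr0.le hr1 S]
    have hrS : (0:ℝ) < r ^ S := by positivity
    have hr1' : r ^ (S + 1) ≤ r ^ S := pow_le_pow_of_le_one hr0.le hr1.le (by omega)
    have hS1 : (1:ℝ) ≤ (S:ℝ) + 1 := by
      have := Nat.cast_nonneg (α := ℝ) S
      linarith
    have haux : r ^ (S + 1) * (1 - r)⁻¹ ≤ (1 - r)⁻¹ * r ^ S * ((S:ℝ) + 1) := by
      calc r ^ (S + 1) * (1 - r)⁻¹ ≤ r ^ S * (1 - r)⁻¹ :=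
            mul_le_mul_of_nonneg_right hr1' hinv0.le
        _ = (1 - r)⁻¹ * r ^ S * 1 := by ring
        _ ≤ (1 - r)⁻¹ * r ^ S * ((S:ℝ) + 1) := by
            apply mul_le_mul_of_nonneg_left hS1
            positivity
    have hkey : ((S:ℝ) + 1) * r ^ S + r ^ (S + 1) * (1 - r)⁻¹
        ≤ ((1 - r)⁻¹ + 1) * r ^ S * ((S:ℝ) + 1) := by
      have : ((S:ℝ) + 1) * r ^ S + r ^ (S + 1) * (1 - r)⁻¹
          ≤ ((S:ℝ) + 1) * r ^ S + (1 - r)⁻¹ * r ^ S * ((S:ℝ) + 1) := by linarith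
      calc ((S:ℝ) + 1) * r ^ S + r ^ (S + 1) * (1 - r)⁻¹
          ≤ ((S:ℝ) + 1) * r ^ S + (1 - r)⁻¹ * r ^ S * ((S:ℝ) + 1) := this
        _ = ((1 - r)⁻¹ + 1) * r ^ S * ((S:ℝ) + 1) := by ring
    calc 2 * C * (1 - r)⁻¹ * (((S:ℝ) + 1) * r ^ S + r ^ (S + 1) * (1 - r)⁻¹)
        ≤ 2 * C * (1 - r)⁻¹ * (((1 - r)⁻¹ + 1) * r ^ S * ((S:ℝ) + 1)) :=
          mul_le_mul_of_nonneg_left hkey (by positivity)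
      _ = 2 * C * (1 - r)⁻¹ * ((1 - r)⁻¹ + 1) * r ^ S * ((S:ℝ) + 1) := by ring
  have htarget : (2:ℝ) ^ (-((j:ℝ)+(j':ℝ)) * (2*α)) = r ^ S := hre j j'
  rw [htarget]
  have : ((j:ℝ) + (j':ℝ) + 1) = ((S:ℝ) + 1) := by rw [hS]; push_cast; ring
  rw [this]
  calc |∑' p : ℕ × ℕ, F p| ≤ ∑' p : ℕ × ℕ, G p := step1
    _ ≤ 2 * C * (1 - r)⁻¹ * ((1 - r)⁻¹ + 1) * r ^ S * ((S : ℝ) + 1) := step2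
    _ = 2 * C * (1 - r)⁻¹ * ((1 - r)⁻¹ + 1) * (r ^ S) * ((S : ℝ) + 1) := by ring
end
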